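/- Let 𝒫 = {(a₂₁, tr A, det A) ∈ ℂ³ : A = [aᵢⱼ] is a 2×2 complex matrix with operator norm ‖A‖ < 1} (the pentablock). Suppose a ∈ ℂ with a ≠ 0 and (s,p) ∈ ℂ² satisfies s = conj(s)·p, |p| = 1 and |s| ≤ 2. Then |a|² = 1 − |s|²/4 if and only if the set {λ ∈ ℂ : (λa, s, p) ∈ closure(𝒫)} is equal to the closed unit disc {λ ∈ ℂ : |λ| ≤ 1}. -/

import Mathlib

/-!
The closure of `𝒫` is the image of the closed unit ball of matrices, and over a point `(s, p)` of
the distinguished boundary of the symmetrized bidisc its slice is the disc `|x|² ≤ 1 - |s|²/4`.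
Every contraction satisfies `|a₂₁|² + |tr A|²/4 ≤ 1`, because its first column and second row have
norm at most one and `|tr A|²/4 ≤ (|a₁₁|² + |a₂₂|²)/2`. Conversely, writing `p = μ²` with `|μ| = 1`
makes `s / μ` real, which gives `w` with `w + p w̄ = s` and `|w|² = 1 - |x|²`; then
`!![w, -p x̄; x, p w̄]` is unitary, hence of norm one, and has data `(x, s, p)`.
The theorem follows because `{l | |l a|² ≤ R}` is the unit disc exactly when `|a|² = R`.
-/

/-- The pentablock: the image of the open unit ball (operator norm) of `2 × 2` complex
matrices under `A ↦ (a₂₁, tr A, det A)`. -/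
noncomputable def pentablock : Set (ℂ × ℂ × ℂ) :=
  {x | ∃ A : Matrix (Fin 2) (Fin 2) ℂ,
    ‖Matrix.toEuclideanCLM (𝕜 := ℂ) (n := Fin 2) A‖ < 1 ∧
    x = (A 1 0, Matrix.trace A, Matrix.det A)}

open ComplexConjugate Metric
open scoped Matrix Matrix.Norms.L2Operator

namespace Matrix

variable {𝕜 m n : Type*} [RCLike 𝕜] [Fintype m] [Fintype n] [DecidableEq n]

theorem sum_norm_sq_col_le_l2_opNorm_sq (A : Matrix m n 𝕜) (j : n) :
    ∑ i, ‖A i j‖ ^ 2 ≤ ‖A‖ ^ 2 := by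
  have h := A.l2_opNorm_mulVec (WithLp.toLp 2 (Pi.single j 1))
  rw [← sq_le_sq₀ (by positivity) (by positivity), EuclideanSpace.norm_sq_eq] at h
  simpa [mulVec_single] using h

theorem sum_norm_sq_row_le_l2_opNorm_sq [DecidableEq m] (A : Matrix m n 𝕜) (i : m) :
    ∑ j, ‖A i j‖ ^ 2 ≤ ‖A‖ ^ 2 := by
  simpa [l2_opNorm_conjTranspose] using Aᴴ.sum_norm_sq_col_le_l2_opNorm_sq i

theorem norm_sq_apply_one_zero_add_norm_sq_trace_div_four_le (A : Matrix (Fin 2) (Fin 2) 𝕜) :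
    ‖A 1 0‖ ^ 2 + ‖A.trace‖ ^ 2 / 4 ≤ ‖A‖ ^ 2 := by
  have hcol := A.sum_norm_sq_col_le_l2_opNorm_sq 0
  have hrow := A.sum_norm_sq_row_le_l2_opNorm_sq 1
  simp only [Fin.sum_univ_two] at hcol hrow
  have htr : ‖A.trace‖ ≤ ‖A 0 0‖ + ‖A 1 1‖ := by
    rw [trace_fin_two]
    exact norm_add_le _ _
  nlinarith [sq_nonneg (‖A 0 0‖ - ‖A 1 1‖), mul_self_le_mul_self (norm_nonneg _) htr]

end Matrix

theorem Complex.conj_mul_self_of_norm_eq_one {μ : ℂ} (h : ‖μ‖ = 1) : conj μ * μ = 1 := by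
  rw [conj_mul', h, ofReal_one, one_pow]

theorem exists_sq_eq_mul_real_of_eq_conj_mul {s p : ℂ} (h₁ : s = conj s * p) (h₂ : ‖p‖ = 1) :
    ∃ μ : ℂ, ∃ t : ℝ, μ ^ 2 = p ∧ ‖μ‖ = 1 ∧ s = μ * t := by
  obtain ⟨μ, hμp⟩ := IsAlgClosed.exists_pow_nat_eq p two_pos
  have hμ1 : ‖μ‖ = 1 := (pow_eq_one_iff_of_nonneg (norm_nonneg μ) two_ne_zero).mp
    (by rw [← norm_pow, hμp, h₂])
  have hμ := Complex.conj_mul_self_of_norm_eq_one hμ1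
  have hreal : conj (s * conj μ) = s * conj μ := by
    rw [map_mul, Complex.conj_conj]
    linear_combination (-conj μ) * h₁ - (conj s * μ) * hμ + (conj s * conj μ) * hμp
  refine ⟨μ, (s * conj μ).re, hμp, hμ1, ?_⟩
  rw [Complex.conj_eq_iff_re.mp hreal]
  linear_combination (-s) * hμ

theorem exists_add_mul_conj_eq_of_eq_conj_mul {s p : ℂ} (h₁ : s = conj s * p) (h₂ : ‖p‖ = 1)
    {r : ℝ} (hr : ‖s‖ ^ 2 / 4 ≤ r) : ∃ w : ℂ, w + p * conj w = s ∧ ‖w‖ ^ 2 = r := by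
  obtain ⟨μ, t, hμp, hμ1, rfl⟩ := exists_sq_eq_mul_real_of_eq_conj_mul h₁ h₂
  have hst : ‖μ * t‖ ^ 2 = t ^ 2 := by
    rw [norm_mul, hμ1, one_mul, Complex.norm_real, Real.norm_eq_abs, sq_abs]
  set d := √(r - t ^ 2 / 4)
  have hd : d ^ 2 = r - t ^ 2 / 4 := Real.sq_sqrt (by linarith)
  refine ⟨μ * ⟨t / 2, d⟩, ?_, ?_⟩
  · have hre := Complex.add_conj ⟨t / 2, d⟩
    simp only [mul_div_cancel₀ t two_ne_zero] at hre
    rw [← hμp, map_mul]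
    linear_combination
      (conj (⟨t / 2, d⟩ : ℂ) * μ) * Complex.conj_mul_self_of_norm_eq_one hμ1 + μ * hre
  · rw [norm_mul, hμ1, one_mul, Complex.sq_norm, Complex.normSq_mk]
    nlinarith

theorem exists_mem_unitaryGroup_apply_one_zero_trace_det {s p : ℂ} (h₁ : s = conj s * p)
    (h₂ : ‖p‖ = 1) {x : ℂ} (hx : ‖x‖ ^ 2 ≤ 1 - ‖s‖ ^ 2 / 4) :
    ∃ U ∈ Matrix.unitaryGroup (Fin 2) ℂ, U 1 0 = x ∧ U.trace = s ∧ U.det = p := by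
  obtain ⟨w, hws, hw⟩ :=
    exists_add_mul_conj_eq_of_eq_conj_mul h₁ h₂ (r := 1 - ‖x‖ ^ 2) (by linarith)
  have hwx : conj w * w + conj x * x = 1 := by
    rw [Complex.conj_mul', Complex.conj_mul', ← Complex.ofReal_pow, hw]
    push_cast
    ring
  have hp := Complex.conj_mul_self_of_norm_eq_one h₂
  refine ⟨!![w, -(p * conj x); x, p * conj w], ?_, rfl, ?_, ?_⟩
  · have hstar : star !![w, -(p * conj x); x, p * conj w] =
        !![conj w, conj x; -(conj p * x), conj p * w] := by
      rw [Matrix.eta_fin_two (star _)]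
      simp
    rw [Matrix.mem_unitaryGroup_iff', hstar, Matrix.mul_fin_two, Matrix.one_fin_two]
    simp only [EmbeddingLike.apply_eq_iff_eq, Matrix.vecCons_inj, and_true]
    refine ⟨⟨?_, ?_⟩, ?_, ?_⟩
    · linear_combination hwx
    · ring
    · ring
    · linear_combination (conj x * x + conj w * w) * hp + hwx
  · rw [Matrix.trace_fin_two_of, hws]
  · rw [Matrix.det_fin_two_of]
    linear_combination p * hwx

theorem closure_pentablock :
    closure pentablock =
      (fun A : Matrix (Fin 2) (Fin 2) ℂ ↦ (A 1 0, A.trace, A.det)) '' closedBall 0 1 := by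
  have hF : Continuous fun A : Matrix (Fin 2) (Fin 2) ℂ ↦ (A 1 0, A.trace, A.det) := by
    fun_prop
  have hP : pentablock =
      (fun A : Matrix (Fin 2) (Fin 2) ℂ ↦ (A 1 0, A.trace, A.det)) '' ball 0 1 := by
    ext x
    simp [pentablock, eq_comm, Matrix.cstar_norm_def]
  rw [hP]
  refine subset_antisymm ?_ ?_
  · exact closure_minimal (Set.image_mono ball_subset_closedBall)
      ((isCompact_closedBall 0 1).image hF).isClosed
  · rw [← closure_ball (0 : Matrix (Fin 2) (Fin 2) ℂ) one_ne_zero]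
    exact image_closure_subset_closure_image hF

theorem mem_closure_pentablock_iff {x s p : ℂ} (h₁ : s = conj s * p) (h₂ : ‖p‖ = 1) :
    (x, s, p) ∈ closure pentablock ↔ ‖x‖ ^ 2 ≤ 1 - ‖s‖ ^ 2 / 4 := by
  rw [closure_pentablock]
  constructor
  · rintro ⟨A, hA, hAx⟩
    simp only [Prod.mk.injEq] at hAx
    obtain ⟨rfl, rfl, -⟩ := hAx
    have hA1 : ‖A‖ ≤ 1 := mem_closedBall_zero_iff.mp hA
    nlinarith [A.norm_sq_apply_one_zero_add_norm_sq_trace_div_four_le, norm_nonneg A]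
  · intro hx
    obtain ⟨U, hU, rfl, rfl, rfl⟩ := exists_mem_unitaryGroup_apply_one_zero_trace_det h₁ h₂ hx
    exact ⟨U, mem_closedBall_zero_iff.mpr (CStarRing.norm_of_mem_unitary hU).le, rfl⟩

theorem setOf_norm_mul_sq_le_eq_setOf_norm_le_one_iff {𝕜 : Type*} [RCLike 𝕜] {a : 𝕜}
    (ha : a ≠ 0) {R : ℝ} :
    {l : 𝕜 | ‖l * a‖ ^ 2 ≤ R} = {l | ‖l‖ ≤ 1} ↔ ‖a‖ ^ 2 = R := by
  have hapos : 0 < ‖a‖ := norm_pos_iff.mpr ha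
  constructor
  · intro h
    have hmem (l : 𝕜) : ‖l * a‖ ^ 2 ≤ R ↔ ‖l‖ ≤ 1 := Set.ext_iff.mp h l
    have hle : ‖a‖ ^ 2 ≤ R := by simpa using (hmem 1).mpr (by simp)
    have hl : ‖((√R / ‖a‖ : ℝ) : 𝕜)‖ = √R / ‖a‖ :=
      RCLike.norm_of_nonneg (div_nonneg (Real.sqrt_nonneg R) hapos.le)
    have hR : ‖((√R / ‖a‖ : ℝ) : 𝕜) * a‖ ^ 2 = R := by
      rw [norm_mul, hl, div_mul_cancel₀ _ hapos.ne', Real.sq_sqrt ((sq_nonneg _).trans hle)]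
    have hsqrt := (hmem _).mp hR.le
    rw [hl, div_le_one hapos, Real.sqrt_le_left hapos.le] at hsqrt
    exact le_antisymm hle hsqrt
  · rintro rfl
    ext l
    change ‖l * a‖ ^ 2 ≤ ‖a‖ ^ 2 ↔ ‖l‖ ≤ 1
    rw [norm_mul, mul_pow, mul_le_iff_le_one_left (by positivity), sq_le_one_iff₀ (norm_nonneg l)]

theorem statement1_general (a : ℂ) (ha : a ≠ 0) (s p : ℂ) (h₁ : s = (starRingEnd ℂ) s * p)
    (h₂ : ‖p‖ = 1) :
    ‖a‖ ^ 2 = 1 - ‖s‖ ^ 2 / 4 ↔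
      {l : ℂ | (l * a, s, p) ∈ closure pentablock} = {l : ℂ | ‖l‖ ≤ 1} := by
  have hslice : {l : ℂ | (l * a, s, p) ∈ closure pentablock} =
      {l | ‖l * a‖ ^ 2 ≤ 1 - ‖s‖ ^ 2 / 4} :=
    Set.ext fun _ ↦ mem_closure_pentablock_iff h₁ h₂
  rw [hslice, setOf_norm_mul_sq_le_eq_setOf_norm_le_one_iff ha]

/-- For `a ≠ 0` and `(s,p)` in the distinguished boundary of the symmetrized bidisc,
`|a|² = 1 - |s|²/4` iff `{λ : (λa, s, p) ∈ closure 𝒫}` is the closed unit disc. -/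
theorem statement1 (a : ℂ) (ha : a ≠ 0) (s p : ℂ) (h₁ : s = (starRingEnd ℂ) s * p)
    (h₂ : ‖p‖ = 1) (h₃ : ‖s‖ ≤ 2) :
    ‖a‖ ^ 2 = 1 - ‖s‖ ^ 2 / 4 ↔
      {l : ℂ | (l * a, s, p) ∈ closure pentablock} = {l : ℂ | ‖l‖ ≤ 1} :=
  statement1_general a ha s p h₁ h₂
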